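/- If G is a graph of girth at least 6 with maximum degree Δ, then ν_s(G) ≥ (n(G) − i(G)) / (Δ²/4 + Δ + 1). -/

import Mathlib

open SimpleGraph

/-- An induced matching: a set of edges such that any two vertices incident with
distinct edges have distance at least 2 (i.e. are distinct and non-adjacent). -/
def IsInducedMatching {V : Type} (G : SimpleGraph V) (M : Set (Sym2 V)) : Prop :=
  M ⊆ G.edgeSet ∧
    ∀ e ∈ M, ∀ f ∈ M, e ≠ f → ∀ u ∈ e, ∀ v ∈ f, u ≠ v ∧ ¬ G.Adj u v

/-- The strong matching number: maximum size of an induced matching. -/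
noncomputable def nu_s {V : Type} (G : SimpleGraph V) : ℕ :=
  sSup {k | ∃ M : Set (Sym2 V), IsInducedMatching G M ∧ M.ncard = k}

/-- The number of isolated vertices. -/
noncomputable def isolCount {V : Type} (G : SimpleGraph V) : ℕ :=
  {v : V | ∀ w, ¬ G.Adj v w}.ncard

/-- K₃,₃ (parts {0,1,2} and {3,4,5}) with the edge 0-3 subdivided by the new vertex 6. -/
def K33plus : SimpleGraph (Fin 7) :=
  SimpleGraph.fromEdgeSet
    {s(0,4), s(0,5), s(1,3), s(1,4), s(1,5), s(2,3), s(2,4), s(2,5), s(0,6), s(3,6)}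

/-- The number of connected components isomorphic to K₃,₃⁺. -/
noncomputable def n33plus {V : Type} (G : SimpleGraph V) : ℕ :=
  {c : G.ConnectedComponent | Nonempty (G.induce c.supp ≃g K33plus)}.ncard


section Aux
open Finset



section Helpers
variable {V : Type}

lemma no_c4 (G : SimpleGraph V) (hg : 6 ≤ G.egirth)
    {a b c d : V} (h1 : G.Adj a b) (h2 : G.Adj b c) (h3 : G.Adj c d) (h4 : G.Adj d a)
    (hac : a ≠ c) (hbd : b ≠ d) : False := by
  have hc : (Walk.cons h1 (Walk.cons h2 (Walk.cons h3 (Walk.cons h4 Walk.nil)))).IsCycle := by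
    rw [SimpleGraph.Walk.isCycle_def]
    refine ⟨?_, by simp, ?_⟩
    · rw [SimpleGraph.Walk.isTrail_def]
      simp [Sym2.eq, Sym2.rel_iff']
      aesop
    · simp
      aesop
  have := SimpleGraph.le_egirth.mp hg a _ hc
  simp only [Walk.length_cons, Walk.length_nil] at this
  norm_num at this

lemma no_c5 (G : SimpleGraph V) (hg : 6 ≤ G.egirth)
    {a b c d e : V} (h1 : G.Adj a b) (h2 : G.Adj b c) (h3 : G.Adj c d) (h4 : G.Adj d e)
    (h5 : G.Adj e a)
    (hac : a ≠ c) (had : a ≠ d) (hbd : b ≠ d) (hbe : b ≠ e) (hce : c ≠ e) : False := by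
  have hc : (Walk.cons h1 (Walk.cons h2 (Walk.cons h3 (Walk.cons h4
      (Walk.cons h5 Walk.nil))))).IsCycle := by
    rw [SimpleGraph.Walk.isCycle_def]
    refine ⟨?_, by simp, ?_⟩
    · rw [SimpleGraph.Walk.isTrail_def]
      simp [Sym2.eq, Sym2.rel_iff']
      aesop
    · simp
      aesop
  have := SimpleGraph.le_egirth.mp hg a _ hc
  simp only [Walk.length_cons, Walk.length_nil] at this
  norm_num at this




variable [Finite V]

lemma im_bdd (H : SimpleGraph V) :
    BddAbove {k | ∃ M : Set (Sym2 V), IsInducedMatching H M ∧ M.ncard = k} := by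
  refine ⟨Nat.card (Sym2 V), fun k ⟨M, _, hM⟩ => ?_⟩
  rw [← hM, ← Set.ncard_univ]
  exact Set.ncard_le_ncard (Set.subset_univ M) Set.finite_univ

lemma nu_s_spec (H : SimpleGraph V) :
    ∃ M : Set (Sym2 V), IsInducedMatching H M ∧ M.ncard = nu_s H := by
  have hne : {k | ∃ M : Set (Sym2 V), IsInducedMatching H M ∧ M.ncard = k}.Nonempty :=
    ⟨0, ∅, ⟨Set.empty_subset _, fun e he => absurd he (Set.notMem_empty e)⟩, by simp⟩
  exact Nat.sSup_mem hne (im_bdd H)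

lemma le_nu_s (H : SimpleGraph V) {M : Set (Sym2 V)} (hM : IsInducedMatching H M) :
    M.ncard ≤ nu_s H :=
  le_csSup (im_bdd H) ⟨M, hM, rfl⟩

end Helpers


section Main
variable {V : Type} [Fintype V] [DecidableEq V]




def cutoff (H : SimpleGraph V) (S : Finset V) : SimpleGraph V where
  Adj x y := H.Adj x y ∧ x ∉ S ∧ y ∉ S
  symm := ⟨fun x y (h : H.Adj x y ∧ x ∉ S ∧ y ∉ S) => (⟨h.1.symm, h.2.2, h.2.1⟩ : H.Adj y x ∧ y ∉ S ∧ x ∉ S)⟩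
  loopless := ⟨fun x (h : H.Adj x x ∧ x ∉ S ∧ x ∉ S) => H.loopless.irrefl x h.1⟩

instance (H : SimpleGraph V) [DecidableRel H.Adj] (S : Finset V) :
    DecidableRel (cutoff H S).Adj := fun _ _ => instDecidableAnd

@[simp] lemma cutoff_adj (H : SimpleGraph V) (S : Finset V) (x y : V) :
    (cutoff H S).Adj x y ↔ H.Adj x y ∧ x ∉ S ∧ y ∉ S := Iff.rfl

lemma cutoff_le (H : SimpleGraph V) (S : Finset V) : cutoff H S ≤ H := fun _ _ h => h.1

/-- pendant neighbors -/
def pend (H : SimpleGraph V) [DecidableRel H.Adj] (w : V) : Finset V :=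
  (H.neighborFinset w).filter (fun z => H.degree z = 1)

lemma sq_div_arith (Δ m : ℕ) (hm : m ≤ Δ) : (Δ - m) * m ≤ Δ ^ 2 / 4 := by
  rw [Nat.le_div_iff_mul_le (by norm_num)]
  zify [hm]
  nlinarith [sq_nonneg ((Δ : ℤ) - 2 * m)]

lemma two_mul_le (Δ : ℕ) (h1 : 1 ≤ Δ) : 2 * Δ ≤ Δ ^ 2 / 4 + Δ + 1 := by
  have h : Δ - 1 ≤ Δ ^ 2 / 4 := by
    rw [Nat.le_div_iff_mul_le (by norm_num)]
    zify [h1]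
    nlinarith [sq_nonneg ((Δ : ℤ) - 2)]
  omega

lemma good_edge (H : SimpleGraph V) [DecidableRel H.Adj] (Δ : ℕ)
    (hΔ : ∀ v, H.degree v ≤ Δ) {u₀ v₀ : V} (h₀ : H.Adj u₀ v₀) :
    ∃ u v, H.Adj u v ∧
      (H.neighborFinset u ∪ H.neighborFinset v).card
        + ∑ w ∈ (H.neighborFinset u ∪ H.neighborFinset v) \ {u, v}, (pend H w).card
        ≤ Δ ^ 2 / 4 + Δ + 1 := by
  have hΔ1 : 1 ≤ Δ := by
    have h1 : 0 < H.degree u₀ := by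
      rw [← card_neighborFinset_eq_degree]
      exact card_pos.mpr ⟨v₀, (mem_neighborFinset H u₀ v₀).mpr h₀⟩
    exact le_trans h1 (hΔ u₀)
  by_cases hp : ∃ w : V, (pend H w).Nonempty
  · -- there is a vertex with a pendant neighbor
    obtain ⟨u, hu, hmax⟩ := (Finset.univ.filter (fun w => (pend H w).Nonempty)).exists_max_image
      (fun w => (pend H w).card)
      (by obtain ⟨w, hw⟩ := hp; exact ⟨w, by simp [hw]⟩)
    have hune : (pend H u).Nonempty := (mem_filter.mp hu).2
    obtain ⟨z, hz⟩ := hune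
    have hz' := mem_filter.mp hz
    have hadj : H.Adj u z := (mem_neighborFinset H u z).mp hz'.1
    have hdz : H.degree z = 1 := hz'.2
    have hmax' : ∀ x, (pend H x).card ≤ (pend H u).card := by
      intro x
      by_cases hx : (pend H x).Nonempty
      · exact hmax x (mem_filter.mpr ⟨mem_univ x, hx⟩)
      · simp [Finset.not_nonempty_iff_eq_empty.mp hx]
    -- N(z) = {u}
    have hNz : H.neighborFinset z = {u} := by
      have hc : (H.neighborFinset z).card = 1 := hdz
      obtain ⟨a, ha⟩ := Finset.card_eq_one.mp hc
      have : u ∈ H.neighborFinset z := (mem_neighborFinset H z u).mpr hadj.symm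
      rw [ha] at this ⊢
      rw [Finset.mem_singleton.mp this]
    refine ⟨u, z, hadj, ?_⟩
    have hScard : (H.neighborFinset u ∪ H.neighborFinset z).card = H.degree u + 1 := by
      rw [hNz]
      rw [Finset.union_comm]
      have : ({u} : Finset V) ∪ H.neighborFinset u = insert u (H.neighborFinset u) := by
        ext x; simp [or_comm]
      rw [this, Finset.card_insert_of_notMem (H.notMem_neighborFinset_self u),
        card_neighborFinset_eq_degree]
    have hSdiff : (H.neighborFinset u ∪ H.neighborFinset z) \ {u, z}
        = H.neighborFinset u \ {z} := by
      rw [hNz]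
      ext x
      simp only [Finset.mem_sdiff, Finset.mem_union, Finset.mem_singleton,
        Finset.mem_insert, mem_neighborFinset]
      constructor
      · rintro ⟨h1 | h1, h2⟩
        · exact ⟨h1, fun h => h2 (Or.inr h)⟩
        · exact absurd (Or.inl h1) h2
      · rintro ⟨h1, h2⟩
        refine ⟨Or.inl h1, ?_⟩
        rintro (rfl | rfl)
        · exact H.loopless.irrefl x h1
        · exact h2 rfl
    rw [hScard, hSdiff]
    by_cases hdu : H.degree u = 1
    · -- component is a single edge
      have hNu : H.neighborFinset u = {z} := by
        obtain ⟨a, ha⟩ := Finset.card_eq_one.mp (show (H.neighborFinset u).card = 1 from hdu)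
        have : z ∈ H.neighborFinset u := (mem_neighborFinset H u z).mpr hadj
        rw [ha] at this ⊢
        rw [Finset.mem_singleton.mp this]
      rw [hNu]
      simp only [Finset.sdiff_self, Finset.sum_empty, hdu]
      have : Δ ^ 2 / 4 + Δ + 1 ≥ 2 := by omega
      omega
    · -- degree u ≥ 2 : pendant neighbors of u have pend-count 0
      have hdu2 : 2 ≤ H.degree u := by
        have : 0 < H.degree u := by
          rw [← card_neighborFinset_eq_degree]
          exact card_pos.mpr ⟨z, hz'.1⟩
        omega
      set m := (pend H u).card with hm
      have hm1 : 1 ≤ m := card_pos.mpr ⟨z, hz⟩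
      have hmd : m ≤ H.degree u := by
        rw [← card_neighborFinset_eq_degree]
        exact card_le_card (filter_subset _ _)
      -- pendant neighbors of u contribute 0
      have hzero : ∀ x ∈ H.neighborFinset u, H.degree x = 1 → (pend H x).card = 0 := by
        intro x hx hdx
        have hNx : H.neighborFinset x = {u} := by
          obtain ⟨a, ha⟩ := Finset.card_eq_one.mp (show (H.neighborFinset x).card = 1 from hdx)
          have : u ∈ H.neighborFinset x :=
            (mem_neighborFinset H x u).mpr ((mem_neighborFinset H u x).mp hx).symm
          rw [ha] at this ⊢
          rw [Finset.mem_singleton.mp this]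
        rw [Finset.card_eq_zero]
        unfold pend
        rw [hNx]
        rw [Finset.filter_singleton]
        simp [hdu]
      -- the sum over N(u) \ {z}
      have hsum : ∑ w ∈ H.neighborFinset u \ {z}, (pend H w).card
          ≤ (H.degree u - m) * m := by
        have hsub : ((H.neighborFinset u \ {z}).filter (fun x => ¬ H.degree x = 1))
            ⊆ H.neighborFinset u \ {z} := filter_subset _ _
        have heq : ∑ w ∈ H.neighborFinset u \ {z}, (pend H w).card
            = ∑ w ∈ (H.neighborFinset u \ {z}).filter (fun x => ¬ H.degree x = 1),
                (pend H w).card := by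
          refine (Finset.sum_subset hsub ?_).symm
          intro x hx hnx
          simp only [Finset.mem_filter, not_and, not_not] at hnx
          exact hzero x (Finset.mem_sdiff.mp hx).1 (hnx hx)
        rw [heq]
        calc ∑ w ∈ (H.neighborFinset u \ {z}).filter (fun x => ¬ H.degree x = 1),
                (pend H w).card
            ≤ ((H.neighborFinset u \ {z}).filter (fun x => ¬ H.degree x = 1)).card * m :=
              Finset.sum_le_card_nsmul _ _ m (fun x _ => hmax' x)
          _ ≤ (H.degree u - m) * m := by
              apply Nat.mul_le_mul_right
              have h1 : (H.neighborFinset u \ {z}).filter (fun x => ¬ H.degree x = 1)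
                  ⊆ (H.neighborFinset u).filter (fun x => ¬ H.degree x = 1) := by
                apply Finset.filter_subset_filter
                exact Finset.sdiff_subset
              refine le_trans (card_le_card h1) ?_
              have h2 : ((H.neighborFinset u).filter (fun x => H.degree x = 1)).card
                  + ((H.neighborFinset u).filter (fun x => ¬ H.degree x = 1)).card
                  = (H.neighborFinset u).card := Finset.card_filter_add_card_filter_not _
              have h3 : ((H.neighborFinset u).filter (fun x => H.degree x = 1)).card = m := rfl
              rw [card_neighborFinset_eq_degree] at h2
              omega
      have key1 : (H.degree u - m) * m ≤ Δ ^ 2 / 4 := by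
        refine le_trans ?_ (sq_div_arith Δ m (le_trans hmd (hΔ u)))
        exact Nat.mul_le_mul_right m (Nat.sub_le_sub_right (hΔ u) m)
      have := hΔ u
      omega
  · -- no pendant vertex at all
    push_neg at hp
    refine ⟨u₀, v₀, h₀, ?_⟩
    have hzero : ∀ w, (pend H w).card = 0 := by
      intro w
      rw [Finset.card_eq_zero]
      exact Finset.not_nonempty_iff_eq_empty.mp (by simpa using hp w)
    have hsum : ∑ w ∈ (H.neighborFinset u₀ ∪ H.neighborFinset v₀) \ {u₀, v₀},
        (pend H w).card = 0 := Finset.sum_eq_zero (fun w _ => hzero w)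
    rw [hsum]
    have hcard : (H.neighborFinset u₀ ∪ H.neighborFinset v₀).card ≤ 2 * Δ := by
      refine le_trans (Finset.card_union_le _ _) ?_
      have := hΔ u₀
      have := hΔ v₀
      rw [card_neighborFinset_eq_degree, card_neighborFinset_eq_degree]
      omega
    have := two_mul_le Δ hΔ1
    omega

lemma isol_all (H : SimpleGraph V) (h0 : ∀ x y : V, ¬ H.Adj x y) (k : ℕ) :
    Fintype.card V ≤ k + isolCount H := by
  have : isolCount H = Fintype.card V := by
    unfold isolCount
    have : {v : V | ∀ w, ¬ H.Adj v w} = Set.univ := by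
      ext v; simp only [Set.mem_setOf_eq, Set.mem_univ, iff_true]; exact h0 v
    rw [this, Set.ncard_univ, Nat.card_eq_fintype_card]
  omega

lemma key (Δ : ℕ) :
    ∀ (n : ℕ) (H : SimpleGraph V) [inst : DecidableRel H.Adj],
      6 ≤ H.egirth → (∀ v, H.degree v ≤ Δ) → H.edgeSet.ncard ≤ n →
      Fintype.card V ≤ nu_s H * (Δ ^ 2 / 4 + Δ + 1) + isolCount H := by
  intro n
  induction n with
  | zero =>
    intro H inst hg hΔ hn
    refine isol_all H (fun x y hxy => ?_) _
    have hmem : s(x, y) ∈ H.edgeSet := H.mem_edgeSet.mpr hxy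
    have := (Set.ncard_pos (Set.toFinite H.edgeSet)).mpr ⟨_, hmem⟩
    omega
  | succ n ih =>
    intro H inst hg hΔ hn
    by_cases h0 : ∀ x y : V, ¬ H.Adj x y
    · exact isol_all H h0 _
    push_neg at h0
    obtain ⟨u₀, v₀, h₀⟩ := h0
    obtain ⟨u, v, hadj, hcost⟩ := good_edge H Δ hΔ h₀
    set D := Δ ^ 2 / 4 + Δ + 1 with hD
    set S : Finset V := H.neighborFinset u ∪ H.neighborFinset v with hS
    have huS : u ∈ S := mem_union_right _ ((mem_neighborFinset H v u).mpr hadj.symm)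
    have hvS : v ∈ S := mem_union_left _ ((mem_neighborFinset H u v).mpr hadj)
    set H' : SimpleGraph V := cutoff H S with hH'
    have hg' : 6 ≤ H'.egirth := hg.trans (egirth_anti (cutoff_le H S))
    have hΔ' : ∀ w, H'.degree w ≤ Δ := by
      intro w
      refine le_trans ?_ (hΔ w)
      rw [← card_neighborFinset_eq_degree, ← card_neighborFinset_eq_degree]
      apply card_le_card
      intro x hx
      rw [mem_neighborFinset] at hx ⊢
      exact hx.1
    have hn' : H'.edgeSet.ncard ≤ n := by
      have hsub : H'.edgeSet ⊆ H.edgeSet :=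
        SimpleGraph.edgeSet_subset_edgeSet.mpr (cutoff_le H S)
      have hmem : s(u, v) ∈ H.edgeSet := H.mem_edgeSet.mpr hadj
      have hnmem : s(u, v) ∉ H'.edgeSet := by
        rw [mem_edgeSet]
        intro h
        exact h.2.1 huS
      have hss : H'.edgeSet ⊂ H.edgeSet := ⟨hsub, fun hall => hnmem (hall hmem)⟩
      have := Set.ncard_lt_ncard hss (Set.toFinite _)
      omega
    have IH := ih H' hg' hΔ' hn'
    -- maximum induced matching of H'
    obtain ⟨M', hM', hcard'⟩ := nu_s_spec H'
    have hend : ∀ e ∈ M', ∀ x ∈ e, x ∉ S := by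
      intro e he
      have h1 : e ∈ H'.edgeSet := hM'.1 he
      revert h1
      induction e using Sym2.ind with
      | _ a b =>
        intro h1 x hx
        rw [mem_edgeSet] at h1
        rw [Sym2.mem_iff] at hx
        rcases hx with rfl | rfl
        · exact h1.2.1
        · exact h1.2.2
    have hsuv : s(u, v) ∉ M' := by
      intro hmem
      have h1 : (s(u, v) : Sym2 V) ∈ H'.edgeSet := hM'.1 hmem
      rw [mem_edgeSet] at h1
      exact h1.2.1 huS
    have hIM : IsInducedMatching H (insert s(u, v) M') := by
      constructor
      · rw [Set.insert_subset_iff]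
        exact ⟨H.mem_edgeSet.mpr hadj,
          fun e he => (SimpleGraph.edgeSet_subset_edgeSet.mpr (cutoff_le H S)) (hM'.1 he)⟩
      · intro e he f hf hef x hx y hy
        rcases Set.mem_insert_iff.mp he with rfl | heM <;>
          rcases Set.mem_insert_iff.mp hf with rfl | hfM
        · exact absurd rfl hef
        · have hyS : y ∉ S := hend f hfM y hy
          rw [Sym2.mem_iff] at hx
          have hxS : x ∈ S := by rcases hx with rfl | rfl; exacts [huS, hvS]
          refine ⟨fun h => hyS (h ▸ hxS), fun hxy => hyS ?_⟩
          rcases hx with h | h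
          · exact mem_union_left _ ((mem_neighborFinset H u y).mpr (by rw [← h]; exact hxy))
          · exact mem_union_right _ ((mem_neighborFinset H v y).mpr (by rw [← h]; exact hxy))
        · have hxS : x ∉ S := hend e heM x hx
          rw [Sym2.mem_iff] at hy
          have hyS : y ∈ S := by rcases hy with rfl | rfl; exacts [huS, hvS]
          refine ⟨fun h => hxS (h ▸ hyS), fun hxy => hxS ?_⟩
          rcases hy with h | h
          · exact mem_union_left _ ((mem_neighborFinset H u x).mpr (by rw [← h]; exact hxy.symm))
          · exact mem_union_right _ ((mem_neighborFinset H v x).mpr (by rw [← h]; exact hxy.symm))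
        · obtain ⟨hne', hnadj'⟩ := hM'.2 e heM f hfM hef x hx y hy
          exact ⟨hne', fun hxy => hnadj' ⟨hxy, hend e heM x hx, hend f hfM y hy⟩⟩
    have hnu : nu_s H' + 1 ≤ nu_s H := by
      have h1 := le_nu_s H hIM
      rw [Set.ncard_insert_of_notMem hsuv (Set.toFinite M'), hcard'] at h1
      exact h1
    -- bounding the newly isolated vertices
    set Pend : Finset V := (S \ {u, v}).biUnion (pend H) with hPend
    have hsubset : {x : V | ∀ w, ¬ H'.Adj x w}
        ⊆ {x : V | ∀ w, ¬ H.Adj x w} ∪ ↑S ∪ ↑Pend := by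
      intro x hx
      simp only [Set.mem_setOf_eq] at hx
      by_cases hxS : x ∈ S
      · exact Or.inl (Or.inr hxS)
      by_cases hxA : ∀ w, ¬ H.Adj x w
      · exact Or.inl (Or.inl hxA)
      push_neg at hxA
      obtain ⟨y₀, hy₀⟩ := hxA
      have hyS : ∀ y, H.Adj x y → y ∈ S := by
        intro y hy
        by_contra hyS
        exact hx y ⟨hy, hxS, hyS⟩
      have hxu : ¬ H.Adj u x := fun h => hxS (mem_union_left _ ((mem_neighborFinset H u x).mpr h))
      have hxv : ¬ H.Adj v x := fun h => hxS (mem_union_right _ ((mem_neighborFinset H v x).mpr h))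
      have hxnu : x ≠ u := fun h => hxS (h ▸ huS)
      have hxnv : x ≠ v := fun h => hxS (h ▸ hvS)
      have huniq : ∀ y₁ y₂, H.Adj x y₁ → H.Adj x y₂ → y₁ = y₂ := by
        intro y₁ y₂ h1 h2
        by_contra hne
        have hs1 := hyS y₁ h1
        have hs2 := hyS y₂ h2
        rw [hS, Finset.mem_union, mem_neighborFinset, mem_neighborFinset] at hs1 hs2
        have h1u : y₁ ≠ u := fun h => hxu (h ▸ h1).symm
        have h1v : y₁ ≠ v := fun h => hxv (h ▸ h1).symm
        have h2u : y₂ ≠ u := fun h => hxu (h ▸ h2).symm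
        have h2v : y₂ ≠ v := fun h => hxv (h ▸ h2).symm
        rcases hs1 with hs1 | hs1 <;> rcases hs2 with hs2 | hs2
        · exact no_c4 H hg hs1 h1.symm h2 hs2.symm (fun h => hxnu h.symm) hne
        · exact no_c5 H hg h1 hs1.symm hadj hs2 h2.symm hxnu hxnv h1v hne (fun h => h2u h.symm)
        · exact no_c5 H hg h2 hs2.symm hadj hs1 h1.symm hxnu hxnv h2v (Ne.symm hne)
            (fun h => h1u h.symm)
        · exact no_c4 H hg hs1 h1.symm h2 hs2.symm (fun h => hxnv h.symm) hne
      have hNx : H.neighborFinset x = {y₀} := by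
        ext w
        rw [mem_neighborFinset, Finset.mem_singleton]
        exact ⟨fun h => huniq w y₀ h hy₀, fun h => h ▸ hy₀⟩
      have hdx : H.degree x = 1 := by
        rw [← card_neighborFinset_eq_degree, hNx, Finset.card_singleton]
      refine Or.inr ?_
      have hy₀S : y₀ ∈ S \ {u, v} := by
        rw [Finset.mem_sdiff, Finset.mem_insert, Finset.mem_singleton]
        refine ⟨hyS y₀ hy₀, ?_⟩
        rintro (rfl | rfl)
        · exact hxu hy₀.symm
        · exact hxv hy₀.symm
      have hxpend : x ∈ pend H y₀ := by
        rw [pend, Finset.mem_filter, mem_neighborFinset]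
        exact ⟨hy₀.symm, hdx⟩
      exact Finset.mem_coe.mpr (Finset.mem_biUnion.mpr ⟨y₀, hy₀S, hxpend⟩)
    have hiso : isolCount H' ≤ isolCount H + D := by
      have hc1 : isolCount H' ≤ ({x : V | ∀ w, ¬ H.Adj x w} ∪ ↑S ∪ ↑Pend).ncard :=
        Set.ncard_le_ncard hsubset (Set.toFinite _)
      have hIC : isolCount H = {x : V | ∀ w, ¬ H.Adj x w}.ncard := rfl
      have hc2 : ({x : V | ∀ w, ¬ H.Adj x w} ∪ ↑S ∪ ↑Pend).ncard
          ≤ isolCount H + S.card + Pend.card := by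
        refine le_trans (Set.ncard_union_le _ _) ?_
        have h5 := Set.ncard_union_le {x : V | ∀ w, ¬ H.Adj x w} (↑S : Set V)
        rw [Set.ncard_coe_finset] at h5
        rw [Set.ncard_coe_finset, hIC]
        exact add_le_add h5 le_rfl
      have hc3 : Pend.card ≤ ∑ w ∈ S \ {u, v}, (pend H w).card := Finset.card_biUnion_le
      have : S.card + Pend.card ≤ D := by
        refine le_trans ?_ hcost
        omega
      calc isolCount H' ≤ isolCount H + S.card + Pend.card := le_trans hc1 hc2
        _ ≤ isolCount H + D := by omega
    calc Fintype.card V ≤ nu_s H' * D + isolCount H' := IH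
      _ ≤ nu_s H' * D + (isolCount H + D) := by omega
      _ = (nu_s H' + 1) * D + isolCount H := by ring
      _ ≤ nu_s H * D + isolCount H := by
          exact add_le_add (Nat.mul_le_mul_right D hnu) le_rfl

end Main


end Aux

open Finset in
set_option maxHeartbeats 1000000 in
/-- A graph of girth at least 6 with maximum degree Δ satisfies
ν_s ≥ (n − i)/(Δ²/4 + Δ + 1). -/
theorem stmt_16 {V : Type} [Fintype V] (G : SimpleGraph V) [DecidableRel G.Adj]
    (hg : 6 ≤ G.egirth) :
    (nu_s G : ℚ) ≥ ((Nat.card V : ℚ) - (isolCount G : ℚ)) /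
      ((G.maxDegree : ℚ) ^ 2 / 4 + (G.maxDegree : ℚ) + 1) := by
  haveI : DecidableEq V := Classical.decEq V
  set Δ := G.maxDegree with hΔdef
  have hkey := key Δ G.edgeSet.ncard G hg
    (fun v => G.degree_le_maxDegree v) le_rfl
  rw [ge_iff_le, div_le_iff₀ (by positivity)]
  have h1 : (Fintype.card V : ℚ) ≤ (nu_s G : ℚ) * ((Δ ^ 2 / 4 + Δ + 1 : ℕ) : ℚ)
      + (isolCount G : ℚ) := by exact_mod_cast hkey
  have h2 : ((Δ ^ 2 / 4 + Δ + 1 : ℕ) : ℚ) ≤ (Δ : ℚ) ^ 2 / 4 + (Δ : ℚ) + 1 := by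
    push_cast
    have h := Nat.cast_div_le (α := ℚ) (m := Δ ^ 2) (n := 4)
    push_cast at h
    linarith
  have h3 : (Nat.card V : ℚ) = (Fintype.card V : ℚ) := by rw [Nat.card_eq_fintype_card]
  have h4 : (0:ℚ) ≤ (nu_s G : ℚ) := Nat.cast_nonneg _
  nlinarith [mul_le_mul_of_nonneg_left h2 h4]
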